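/- arXiv:1109.6378 — 5 statements merged into one kernel-verified Lean document; each statement's English description precedes it below -/
import Mathlib

section
/- Let M(τ) be the 4×4 block-diagonal matrix whose upper-left 2×2 block is ((cos(ω1 τ), sin(ω1 τ)), (−sin(ω1 τ), cos(ω1 τ))) and whose lower-right 2×2 block is ((cos(ω2 τ), sin(ω2 τ)), (−sin(ω2 τ), cos(ω2 τ))). Then for every positive integer p, the matrix M(0)⁻¹ − M(pT1)⁻¹ has all entries zero except its lower-right 2×2 block, which equals ((2 sin²(√2 π p), sin(2√2 π p)), (−sin(2√2 π p), 2 sin²(√2 π p))); in particular the determinant of this 2×2 block equals 4 sin²(√2 π p), which is nonzero (since √2 is irrational). -/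
set_option maxHeartbeats 1000000

lemma one_fin_four' : (1 : Matrix (Fin 4) (Fin 4) ℝ) =
    !![1,0,0,0; 0,1,0,0; 0,0,1,0; 0,0,0,1] := by
  ext i j
  fin_cases i <;> fin_cases j <;> simp [Matrix.one_apply, Matrix.vecHead, Matrix.vecTail]


open Real Matrix

/-- The matrix `M(0)⁻¹ - M(pT1)⁻¹` for the fundamental matrix `M(τ)` of the Jordan
normal form of the unperturbed double pendulum: it vanishes except for its
lower-right `2 × 2` block, whose determinant `4 sin²(√2 π p)` is nonzero. -/
theorem fundamental_matrix_difference
    (ω1 ω2 T1 : ℝ)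
    (hω1 : ω1 = Real.sqrt (2 - Real.sqrt 2))
    (hω2 : ω2 = Real.sqrt (2 + Real.sqrt 2))
    (hT1 : T1 = 2 * π / ω1)
    (M : ℝ → Matrix (Fin 4) (Fin 4) ℝ)
    (hM : ∀ τ, M τ = !![cos (ω1 * τ), sin (ω1 * τ), 0, 0;
                        -sin (ω1 * τ), cos (ω1 * τ), 0, 0;
                        0, 0, cos (ω2 * τ), sin (ω2 * τ);
                        0, 0, -sin (ω2 * τ), cos (ω2 * τ)])
    (p : ℕ) (hp : 0 < p) :
    (M 0)⁻¹ - (M (p * T1))⁻¹ =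
      !![0, 0, 0, 0;
         0, 0, 0, 0;
         0, 0, 2 * sin (Real.sqrt 2 * π * p) ^ 2, sin (2 * Real.sqrt 2 * π * p);
         0, 0, -sin (2 * Real.sqrt 2 * π * p), 2 * sin (Real.sqrt 2 * π * p) ^ 2] ∧
    (!![2 * sin (Real.sqrt 2 * π * p) ^ 2, sin (2 * Real.sqrt 2 * π * p);
        -sin (2 * Real.sqrt 2 * π * p), 2 * sin (Real.sqrt 2 * π * p) ^ 2] :
      Matrix (Fin 2) (Fin 2) ℝ).det = 4 * sin (Real.sqrt 2 * π * p) ^ 2 ∧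
    4 * sin (Real.sqrt 2 * π * p) ^ 2 ≠ 0 := by
  have s2nn : (0:ℝ) ≤ Real.sqrt 2 := Real.sqrt_nonneg 2
  have hs2 : Real.sqrt 2 ^ 2 = 2 := Real.sq_sqrt (by norm_num)
  have hs2lt : Real.sqrt 2 < 2 := by nlinarith
  have hω1pos : 0 < ω1 := by
    rw [hω1]; exact Real.sqrt_pos.mpr (by nlinarith)
  have hω21 : ω2 = (1 + Real.sqrt 2) * ω1 := by
    rw [hω1, hω2,
      show (2:ℝ) + Real.sqrt 2 = (1 + Real.sqrt 2)^2 * (2 - Real.sqrt 2) by nlinarith]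
    rw [Real.sqrt_mul (by positivity), Real.sqrt_sq (by positivity)]
  have h1 : ω1 * (↑p * T1) = ↑p * (2 * π) := by
    rw [hT1]; field_simp
  have h2 : ω2 * (↑p * T1) = 2 * Real.sqrt 2 * π * ↑p + ↑p * (2 * π) := by
    rw [hω21]; linear_combination (1 + Real.sqrt 2) * h1
  have c1 : Real.cos (ω1 * (↑p * T1)) = 1 := by
    rw [h1]; exact Real.cos_nat_mul_two_pi p
  have s1 : Real.sin (ω1 * (↑p * T1)) = 0 := by
    rw [h1, show (p:ℝ) * (2 * π) = (2 * p : ℕ) * π by push_cast; ring]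
    exact Real.sin_nat_mul_pi _
  have c2 : Real.cos (ω2 * (↑p * T1)) = Real.cos (2 * Real.sqrt 2 * π * ↑p) := by
    rw [h2]
    have := Real.cos_add_int_mul_two_pi (2 * Real.sqrt 2 * π * (p:ℝ)) p
    push_cast at this; exact this
  have s2' : Real.sin (ω2 * (↑p * T1)) = Real.sin (2 * Real.sqrt 2 * π * ↑p) := by
    rw [h2]
    have := Real.sin_add_int_mul_two_pi (2 * Real.sqrt 2 * π * (p:ℝ)) p
    push_cast at this; exact this
  have c2' : Real.cos (ω2 * (↑p * T1)) = 1 - 2 * Real.sin (Real.sqrt 2 * π * ↑p) ^ 2 := by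
    rw [c2, show 2 * Real.sqrt 2 * π * (p:ℝ) = 2 * (Real.sqrt 2 * π * p) by ring,
      Real.cos_two_mul]
    nlinarith [Real.sin_sq_add_cos_sq (Real.sqrt 2 * π * (p:ℝ))]
  have hs2x : Real.sin (2 * Real.sqrt 2 * π * ↑p)
      = 2 * Real.sin (Real.sqrt 2 * π * ↑p) * Real.cos (Real.sqrt 2 * π * ↑p) := by
    rw [show 2 * Real.sqrt 2 * π * (p:ℝ) = 2 * (Real.sqrt 2 * π * p) by ring,
      Real.sin_two_mul]
  have hM0 : M 0 = 1 := by
    rw [hM, one_fin_four']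
    ext i j
    fin_cases i <;> fin_cases j <;> simp [Matrix.vecHead, Matrix.vecTail]
  have hinv : (M (↑p * T1))⁻¹ = M (-(↑p * T1)) := by
    apply Matrix.inv_eq_right_inv
    rw [hM, hM, one_fin_four']
    ext i j
    fin_cases i <;> fin_cases j <;>
      simp [Matrix.mul_apply, Fin.sum_univ_four, mul_neg, Real.cos_neg, Real.sin_neg,
        Matrix.vecHead, Matrix.vecTail] <;>
      nlinarith [Real.sin_sq_add_cos_sq (ω1 * (↑p * T1)),
        Real.sin_sq_add_cos_sq (ω2 * (↑p * T1))]
  have hsin : Real.sin (Real.sqrt 2 * π * ↑p) ≠ 0 := by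
    intro h
    obtain ⟨n, hn⟩ := Real.sin_eq_zero_iff.mp h
    have hpn : Real.sqrt 2 * p = n :=
      mul_right_cancel₀ Real.pi_ne_zero (by linarith [hn])
    have hirr : Irrational ((n:ℝ) / (p:ℝ)) := by
      have : Real.sqrt 2 = (n:ℝ) / (p:ℝ) := by
        field_simp at hpn ⊢
        exact_mod_cast hpn
      exact this ▸ irrational_sqrt_two
    have : ((n / p : ℚ) : ℝ) = (n:ℝ) / (p:ℝ) := by push_cast; ring
    exact (this ▸ hirr) ⟨_, rfl⟩
  refine ⟨?_, ?_, mul_ne_zero (by norm_num) (pow_ne_zero 2 hsin)⟩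
  · rw [hM0, hinv, hM, inv_one]
    ext i j
    fin_cases i <;> fin_cases j <;>
      simp [Matrix.one_apply, mul_neg, Real.cos_neg, Real.sin_neg, c1, s1, c2', s2',
        Matrix.vecHead, Matrix.vecTail]
  · rw [Matrix.det_fin_two_of, hs2x]
    nlinarith [Real.sin_sq_add_cos_sq (Real.sqrt 2 * π * (p:ℝ))]
end

section
/- Let F1, F2 : ℝ × ℝ⁴ → ℝ be C² and pT1-periodic in τ, where p is a positive integer. For i = 1, 2 define F̃i(τ, X, Y, Z, W) = Fi(τ, X/√(4 − 2√2) − Z/√(2(2 + √2)), (Y − W)/√2, X/√(2 − √2) + Z/√(2 + √2), Y + W), and let G1(τ, X, Y, Z, W) = (0, (√2 F̃1 + F̃2)/2, 0, (F̃2 − √2 F̃1)/2) ∈ ℝ⁴. Let M(τ) be the 4×4 block-diagonal matrix with blocks ((cos(ωi τ), sin(ωi τ)), (−sin(ωi τ), cos(ωi τ))) for i = 1, 2, and for z = (X0, Y0, 0, 0) let x(τ, z) = (X0 cos(ω1 τ) + Y0 sin(ω1 τ), Y0 cos(ω1 τ) − X0 sin(ω1 τ), 0, 0). Then the first two components of (1/(pT1))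 ∫₀^{pT1} M(τ)⁻¹ G1(τ, x(τ, z)) dτ are −(ω1/(4πp)) 𝒢1(X0, Y0) and (ω1/(4πp)) 𝒢2(X0, Y0). -/
open Real Filter Topology MeasureTheory intervalIntegral Matrix

/-!
Along the unperturbed solution `x(τ, z)` the arguments of `F̃i` are exactly `A1, B1, C1, D1`, so
`G1(τ, x(τ, z)) = (0, H/2, 0, K/2)` with `H = √2 F̄1 + F̄2`. Since `M(τ)` is a pair of rotations, its
inverse is the pair of opposite rotations, and the first two components of `M(τ)⁻¹ G1` are
`-sin(ω1 τ) H/2` and `cos(ω1 τ) H/2`. Continuity of `F1, F2` makes the integrand integrable, so the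
integral is taken componentwise, and `(p T1)⁻¹ / 2 = ω1 / (4πp)` for `T1 = 2π/ω1`.
-/

theorem inv_mul_two_pi_div_div_two (n ω : ℝ) : (n * (2 * π / ω))⁻¹ / 2 = ω / (4 * π * n) := by
  simp only [div_eq_mul_inv, mul_inv, inv_inv]
  ring

section BlockRotation

variable {c₁ s₁ c₂ s₂ : ℝ}

theorem inv_blockRotation (h₁ : c₁ ^ 2 + s₁ ^ 2 = 1) (h₂ : c₂ ^ 2 + s₂ ^ 2 = 1) :
    (!![c₁, s₁, 0, 0; -s₁, c₁, 0, 0; 0, 0, c₂, s₂; 0, 0, -s₂, c₂] : Matrix (Fin 4) (Fin 4) ℝ)⁻¹ =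
      !![c₁, -s₁, 0, 0; s₁, c₁, 0, 0; 0, 0, c₂, -s₂; 0, 0, s₂, c₂] := by
  refine Matrix.inv_eq_right_inv ?_
  ext i j
  fin_cases i <;> fin_cases j <;>
    simp [Matrix.mul_apply, Fin.sum_univ_four] <;>
    linarith

theorem inv_blockRotation_mulVec (h₁ : c₁ ^ 2 + s₁ ^ 2 = 1) (h₂ : c₂ ^ 2 + s₂ ^ 2 = 1) (a b : ℝ) :
    (!![c₁, s₁, 0, 0; -s₁, c₁, 0, 0; 0, 0, c₂, s₂; 0, 0, -s₂, c₂] : Matrix (Fin 4) (Fin 4) ℝ)⁻¹.mulVec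
        ![0, a, 0, b] = ![-s₁ * a, c₁ * a, -s₂ * b, c₂ * b] := by
  rw [inv_blockRotation h₁ h₂]
  ext i
  fin_cases i <;> simp [Matrix.mulVec, dotProduct, Fin.sum_univ_four]

end BlockRotation

theorem intervalIntegral_eval {ι E : Type*} [Fintype ι] [NormedAddCommGroup E] [NormedSpace ℝ E]
    [CompleteSpace E] {f : ℝ → ι → E} {a b : ℝ} (hf : IntervalIntegrable f volume a b) (i : ι) :
    (∫ x in a..b, f x) i = ∫ x in a..b, f x i := by
  simpa using ((ContinuousLinearMap.proj i : (ι → E) →L[ℝ] E).intervalIntegral_comp_comm hf).symm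

theorem averaged_function_of_pendulum_general
    (F1 F2 : ℝ → ℝ → ℝ → ℝ → ℝ → ℝ)
    (hF1C2 : ContDiff ℝ 2 (fun v : ℝ × ℝ × ℝ × ℝ × ℝ => F1 v.1 v.2.1 v.2.2.1 v.2.2.2.1 v.2.2.2.2))
    (hF2C2 : ContDiff ℝ 2 (fun v : ℝ × ℝ × ℝ × ℝ × ℝ => F2 v.1 v.2.1 v.2.2.1 v.2.2.2.1 v.2.2.2.2))
    (p : ℕ)
    (ω1 ω2 T1 : ℝ)
    (hT1 : T1 = 2 * π / ω1)
    -- the functions `F̃i` of the paper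
    (Ft1 Ft2 : ℝ → (Fin 4 → ℝ) → ℝ)
    (hFt1 : ∀ τ v, Ft1 τ v =
      F1 τ (v 0 / Real.sqrt (4 - 2 * Real.sqrt 2) - v 2 / Real.sqrt (2 * (2 + Real.sqrt 2)))
        ((v 1 - v 3) / Real.sqrt 2)
        (v 0 / Real.sqrt (2 - Real.sqrt 2) + v 2 / Real.sqrt (2 + Real.sqrt 2))
        (v 1 + v 3))
    (hFt2 : ∀ τ v, Ft2 τ v =
      F2 τ (v 0 / Real.sqrt (4 - 2 * Real.sqrt 2) - v 2 / Real.sqrt (2 * (2 + Real.sqrt 2)))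
        ((v 1 - v 3) / Real.sqrt 2)
        (v 0 / Real.sqrt (2 - Real.sqrt 2) + v 2 / Real.sqrt (2 + Real.sqrt 2))
        (v 1 + v 3))
    -- the perturbation `G1` in Jordan coordinates
    (G1 : ℝ → (Fin 4 → ℝ) → (Fin 4 → ℝ))
    (hG1 : ∀ τ v, G1 τ v =
      ![0, (Real.sqrt 2 * Ft1 τ v + Ft2 τ v) / 2, 0, (Ft2 τ v - Real.sqrt 2 * Ft1 τ v) / 2])
    -- the fundamental matrix `M(τ)`
    (M : ℝ → Matrix (Fin 4) (Fin 4) ℝ)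
    (hM : ∀ τ, M τ = !![cos (ω1 * τ), sin (ω1 * τ), 0, 0;
                        -sin (ω1 * τ), cos (ω1 * τ), 0, 0;
                        0, 0, cos (ω2 * τ), sin (ω2 * τ);
                        0, 0, -sin (ω2 * τ), cos (ω2 * τ)])
    (X0 Y0 : ℝ)
    -- the unperturbed periodic solution `x(τ, z)` with `z = (X0, Y0, 0, 0)`
    (xz : ℝ → Fin 4 → ℝ)
    (hxz : ∀ τ, xz τ = ![X0 * cos (ω1 * τ) + Y0 * sin (ω1 * τ),
                         Y0 * cos (ω1 * τ) - X0 * sin (ω1 * τ), 0, 0])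
    -- the functions `A1, B1, C1, D1` and the integrals `𝒢1, 𝒢2` of the paper
    (A1 B1 C1 D1 : ℝ → ℝ)
    (hA1 : ∀ τ, A1 τ = (X0 * cos (ω1 * τ) + Y0 * sin (ω1 * τ)) / Real.sqrt (4 - 2 * Real.sqrt 2))
    (hB1 : ∀ τ, B1 τ = (Y0 * cos (ω1 * τ) - X0 * sin (ω1 * τ)) / Real.sqrt 2)
    (hC1 : ∀ τ, C1 τ = (X0 * cos (ω1 * τ) + Y0 * sin (ω1 * τ)) / Real.sqrt (2 - Real.sqrt 2))
    (hD1 : ∀ τ, D1 τ = Y0 * cos (ω1 * τ) - X0 * sin (ω1 * τ))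
    (calG1 calG2 : ℝ)
    (hcalG1 : calG1 = ∫ τ in (0:ℝ)..(p * T1), sin (ω1 * τ) *
      (Real.sqrt 2 * F1 τ (A1 τ) (B1 τ) (C1 τ) (D1 τ) + F2 τ (A1 τ) (B1 τ) (C1 τ) (D1 τ)))
    (hcalG2 : calG2 = ∫ τ in (0:ℝ)..(p * T1), cos (ω1 * τ) *
      (Real.sqrt 2 * F1 τ (A1 τ) (B1 τ) (C1 τ) (D1 τ) + F2 τ (A1 τ) (B1 τ) (C1 τ) (D1 τ))) :
    (((p * T1 : ℝ)⁻¹ • ∫ τ in (0:ℝ)..(p * T1), ((M τ)⁻¹).mulVec (G1 τ (xz τ))) 0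
        = -(ω1 / (4 * π * p)) * calG1) ∧
    (((p * T1 : ℝ)⁻¹ • ∫ τ in (0:ℝ)..(p * T1), ((M τ)⁻¹).mulVec (G1 τ (xz τ))) 1
        = ω1 / (4 * π * p) * calG2) := by
  subst hT1 hcalG1 hcalG2
  set f₁ := fun τ => F1 τ (A1 τ) (B1 τ) (C1 τ) (D1 τ)
  set f₂ := fun τ => F2 τ (A1 τ) (B1 τ) (C1 τ) (D1 τ)
  have hcurve : Continuous fun τ => (τ, A1 τ, B1 τ, C1 τ, D1 τ) := by
    simp only [hA1, hB1, hC1, hD1]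
    fun_prop
  have hf₁ : Continuous f₁ := hF1C2.continuous.comp hcurve
  have hf₂ : Continuous f₂ := hF2C2.continuous.comp hcurve
  have hintegrand : ∀ τ, ((M τ)⁻¹).mulVec (G1 τ (xz τ)) =
      ![-sin (ω1 * τ) * ((√2 * f₁ τ + f₂ τ) / 2), cos (ω1 * τ) * ((√2 * f₁ τ + f₂ τ) / 2),
        -sin (ω2 * τ) * ((f₂ τ - √2 * f₁ τ) / 2), cos (ω2 * τ) * ((f₂ τ - √2 * f₁ τ) / 2)] := by
    intro τ
    have hFt : ∀ F : ℝ → ℝ → ℝ → ℝ → ℝ → ℝ, F τ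
        (xz τ 0 / √(4 - 2 * √2) - xz τ 2 / √(2 * (2 + √2))) ((xz τ 1 - xz τ 3) / √2)
        (xz τ 0 / √(2 - √2) + xz τ 2 / √(2 + √2)) (xz τ 1 + xz τ 3) =
        F τ (A1 τ) (B1 τ) (C1 τ) (D1 τ) := by
      simp [hxz, hA1, hB1, hC1, hD1]
    rw [hM, hG1, hFt1, hFt2, hFt F1, hFt F2,
      inv_blockRotation_mulVec (cos_sq_add_sin_sq _) (cos_sq_add_sin_sq _)]
  have hint : IntervalIntegrable (fun τ => ((M τ)⁻¹).mulVec (G1 τ (xz τ))) volume 0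
      (p * (2 * π / ω1)) := by
    simp_rw [hintegrand]
    exact Continuous.intervalIntegrable (by fun_prop) _ _
  have hscale : (p * (2 * π / ω1))⁻¹ / 2 = ω1 / (4 * π * p) := inv_mul_two_pi_div_div_two _ _
  simp only [Pi.smul_apply, smul_eq_mul, intervalIntegral_eval hint]
  simp only [hintegrand]
  constructor <;>
  · rw [← hscale, ← intervalIntegral.integral_const_mul, ← intervalIntegral.integral_const_mul]
    congr 1
    ext τ
    simp only [cons_val_zero, cons_val_one]
    ring

/-- The averaged function of the perturbed double pendulum in Jordan coordinates:
the first two components of `(1/(pT1)) ∫₀^{pT1} M(τ)⁻¹ G1(τ, x(τ,z)) dτ` are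
`-(ω1/(4πp)) 𝒢1(X0,Y0)` and `(ω1/(4πp)) 𝒢2(X0,Y0)`. -/
theorem averaged_function_of_pendulum
    (F1 F2 : ℝ → ℝ → ℝ → ℝ → ℝ → ℝ)
    (hF1C2 : ContDiff ℝ 2 (fun v : ℝ × ℝ × ℝ × ℝ × ℝ => F1 v.1 v.2.1 v.2.2.1 v.2.2.2.1 v.2.2.2.2))
    (hF2C2 : ContDiff ℝ 2 (fun v : ℝ × ℝ × ℝ × ℝ × ℝ => F2 v.1 v.2.1 v.2.2.1 v.2.2.2.1 v.2.2.2.2))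
    (p : ℕ) (hp : 0 < p)
    (ω1 ω2 T1 : ℝ)
    (hω1 : ω1 = Real.sqrt (2 - Real.sqrt 2))
    (hω2 : ω2 = Real.sqrt (2 + Real.sqrt 2))
    (hT1 : T1 = 2 * π / ω1)
    (hF1per : ∀ τ a b c d, F1 (τ + p * T1) a b c d = F1 τ a b c d)
    (hF2per : ∀ τ a b c d, F2 (τ + p * T1) a b c d = F2 τ a b c d)
    -- the functions `F̃i` of the paper
    (Ft1 Ft2 : ℝ → (Fin 4 → ℝ) → ℝ)
    (hFt1 : ∀ τ v, Ft1 τ v =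
      F1 τ (v 0 / Real.sqrt (4 - 2 * Real.sqrt 2) - v 2 / Real.sqrt (2 * (2 + Real.sqrt 2)))
        ((v 1 - v 3) / Real.sqrt 2)
        (v 0 / Real.sqrt (2 - Real.sqrt 2) + v 2 / Real.sqrt (2 + Real.sqrt 2))
        (v 1 + v 3))
    (hFt2 : ∀ τ v, Ft2 τ v =
      F2 τ (v 0 / Real.sqrt (4 - 2 * Real.sqrt 2) - v 2 / Real.sqrt (2 * (2 + Real.sqrt 2)))
        ((v 1 - v 3) / Real.sqrt 2)
        (v 0 / Real.sqrt (2 - Real.sqrt 2) + v 2 / Real.sqrt (2 + Real.sqrt 2))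
        (v 1 + v 3))
    -- the perturbation `G1` in Jordan coordinates
    (G1 : ℝ → (Fin 4 → ℝ) → (Fin 4 → ℝ))
    (hG1 : ∀ τ v, G1 τ v =
      ![0, (Real.sqrt 2 * Ft1 τ v + Ft2 τ v) / 2, 0, (Ft2 τ v - Real.sqrt 2 * Ft1 τ v) / 2])
    -- the fundamental matrix `M(τ)`
    (M : ℝ → Matrix (Fin 4) (Fin 4) ℝ)
    (hM : ∀ τ, M τ = !![cos (ω1 * τ), sin (ω1 * τ), 0, 0;
                        -sin (ω1 * τ), cos (ω1 * τ), 0, 0;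
                        0, 0, cos (ω2 * τ), sin (ω2 * τ);
                        0, 0, -sin (ω2 * τ), cos (ω2 * τ)])
    (X0 Y0 : ℝ)
    -- the unperturbed periodic solution `x(τ, z)` with `z = (X0, Y0, 0, 0)`
    (xz : ℝ → Fin 4 → ℝ)
    (hxz : ∀ τ, xz τ = ![X0 * cos (ω1 * τ) + Y0 * sin (ω1 * τ),
                         Y0 * cos (ω1 * τ) - X0 * sin (ω1 * τ), 0, 0])
    -- the functions `A1, B1, C1, D1` and the integrals `𝒢1, 𝒢2` of the paper
    (A1 B1 C1 D1 : ℝ → ℝ)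
    (hA1 : ∀ τ, A1 τ = (X0 * cos (ω1 * τ) + Y0 * sin (ω1 * τ)) / Real.sqrt (4 - 2 * Real.sqrt 2))
    (hB1 : ∀ τ, B1 τ = (Y0 * cos (ω1 * τ) - X0 * sin (ω1 * τ)) / Real.sqrt 2)
    (hC1 : ∀ τ, C1 τ = (X0 * cos (ω1 * τ) + Y0 * sin (ω1 * τ)) / Real.sqrt (2 - Real.sqrt 2))
    (hD1 : ∀ τ, D1 τ = Y0 * cos (ω1 * τ) - X0 * sin (ω1 * τ))
    (calG1 calG2 : ℝ)
    (hcalG1 : calG1 = ∫ τ in (0:ℝ)..(p * T1), sin (ω1 * τ) *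
      (Real.sqrt 2 * F1 τ (A1 τ) (B1 τ) (C1 τ) (D1 τ) + F2 τ (A1 τ) (B1 τ) (C1 τ) (D1 τ)))
    (hcalG2 : calG2 = ∫ τ in (0:ℝ)..(p * T1), cos (ω1 * τ) *
      (Real.sqrt 2 * F1 τ (A1 τ) (B1 τ) (C1 τ) (D1 τ) + F2 τ (A1 τ) (B1 τ) (C1 τ) (D1 τ))) :
    (((p * T1 : ℝ)⁻¹ • ∫ τ in (0:ℝ)..(p * T1), ((M τ)⁻¹).mulVec (G1 τ (xz τ))) 0
        = -(ω1 / (4 * π * p)) * calG1) ∧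
    (((p * T1 : ℝ)⁻¹ • ∫ τ in (0:ℝ)..(p * T1), ((M τ)⁻¹).mulVec (G1 τ (xz τ))) 1
        = ω1 / (4 * π * p) * calG2) :=
  averaged_function_of_pendulum_general F1 F2 hF1C2 hF2C2 p ω1 ω2 T1 hT1 Ft1 Ft2 hFt1 hFt2 G1 hG1 M
    hM X0 Y0 xz hxz A1 B1 C1 D1 hA1 hB1 hC1 hD1 calG1 calG2 hcalG1 hcalG2
end

section
/- Let F1 ≡ 0 and F2(τ, θ1, θ1', θ2, θ2') = (1 − θ1²) sin(ω1 τ), and take p = 1. Then for all (X0, Y0) ∈ ℝ²: 𝒢1(X0, Y0) = −π (X0² + 3 Y0² − 8(2 − √2)) / (8 (2 − √2)^{3/2}) and 𝒢2(X0, Y0) = −π X0 Y0 / (4 (2 − √2)^{3/2}). -/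
/-!
After the substitution `u = ω1 τ`, both averaged functions are `ω1⁻¹` times integrals over
`[0, 2π]` of quartic trigonometric polynomials. Every monomial `sin u ^ m * cos u ^ n` with `n`
odd has zero integral over a full period, and the remaining ones give
`∫ sin² = π`, `∫ sin² cos² = π / 4`, `∫ sin⁴ = 3π / 4`. The factor `(2 - √2) ^ (3 / 2)` is
`(2 - √2) * ω1`.
-/

open Real intervalIntegral

lemma integral_sin_pow_mul_cos_pow_odd_zero_two_pi (m n : ℕ) :
    ∫ x in (0:ℝ)..2 * π, sin x ^ m * cos x ^ (2 * n + 1) = 0 := by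
  simp only [integral_sin_pow_mul_cos_pow_odd, sin_zero, sin_two_pi, integral_same]

lemma integral_sin_sq_zero_two_pi : ∫ x in (0:ℝ)..2 * π, sin x ^ 2 = π := by
  simp

lemma integral_sin_pow_four_zero_two_pi : ∫ x in (0:ℝ)..2 * π, sin x ^ 4 = 3 * π / 4 := by
  rw [integral_sin_pow 2, integral_sin_sq_zero_two_pi]
  norm_num
  ring

lemma integral_sin_sq_mul_cos_sq_zero_two_pi :
    ∫ x in (0:ℝ)..2 * π, sin x ^ 2 * cos x ^ 2 = π / 4 := by
  rw [integral_sin_sq_mul_cos_sq, show 4 * (2 * π) = (8 : ℕ) * π by push_cast; ring,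
    sin_nat_mul_pi, mul_zero, sin_zero, sub_self, zero_div, sub_zero, sub_zero]
  ring

lemma integral_sin_mul_one_sub_sq_mul_sin_zero_two_pi (X Y q : ℝ) :
    ∫ u in (0:ℝ)..2 * π, sin u * ((1 - ((X * cos u + Y * sin u) / q) ^ 2) * sin u)
      = π - π * (X ^ 2 + 3 * Y ^ 2) / (4 * q ^ 2) := by
  calc _ = ∫ u in (0:ℝ)..2 * π, (sin u ^ 2 - X ^ 2 / q ^ 2 * (sin u ^ 2 * cos u ^ 2)
          - 2 * X * Y / q ^ 2 * (sin u ^ 3 * cos u ^ (2 * 0 + 1)) - Y ^ 2 / q ^ 2 * sin u ^ 4) :=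
        integral_congr fun u _ => by ring
    _ = π - X ^ 2 / q ^ 2 * (π / 4) - 2 * X * Y / q ^ 2 * 0 - Y ^ 2 / q ^ 2 * (3 * π / 4) := by
        rw [integral_sub, integral_sub, integral_sub, integral_const_mul, integral_const_mul,
          integral_const_mul, integral_sin_sq_zero_two_pi, integral_sin_sq_mul_cos_sq_zero_two_pi,
          integral_sin_pow_mul_cos_pow_odd_zero_two_pi, integral_sin_pow_four_zero_two_pi]
        all_goals exact Continuous.intervalIntegrable (by fun_prop) _ _
    _ = _ := by ring

lemma integral_cos_mul_one_sub_sq_mul_sin_zero_two_pi (X Y q : ℝ) :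
    ∫ u in (0:ℝ)..2 * π, cos u * ((1 - ((X * cos u + Y * sin u) / q) ^ 2) * sin u)
      = -(π * X * Y / (2 * q ^ 2)) := by
  calc _ = ∫ u in (0:ℝ)..2 * π, (sin u ^ 1 * cos u ^ (2 * 0 + 1)
          - X ^ 2 / q ^ 2 * (sin u ^ 1 * cos u ^ (2 * 1 + 1))
          - 2 * X * Y / q ^ 2 * (sin u ^ 2 * cos u ^ 2)
          - Y ^ 2 / q ^ 2 * (sin u ^ 3 * cos u ^ (2 * 0 + 1))) :=
        integral_congr fun u _ => by ring
    _ = 0 - X ^ 2 / q ^ 2 * 0 - 2 * X * Y / q ^ 2 * (π / 4) - Y ^ 2 / q ^ 2 * 0 := by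
        rw [integral_sub, integral_sub, integral_sub, integral_const_mul, integral_const_mul,
          integral_const_mul, integral_sin_sq_mul_cos_sq_zero_two_pi,
          integral_sin_pow_mul_cos_pow_odd_zero_two_pi,
          integral_sin_pow_mul_cos_pow_odd_zero_two_pi,
          integral_sin_pow_mul_cos_pow_odd_zero_two_pi]
        all_goals exact Continuous.intervalIntegrable (by fun_prop) _ _
    _ = _ := by ring

lemma integral_comp_mul_left_zero_two_pi_div (g : ℝ → ℝ) {ω : ℝ} (hω : ω ≠ 0) :
    ∫ τ in (0:ℝ)..2 * π / ω, g (ω * τ) = ω⁻¹ * ∫ u in (0:ℝ)..2 * π, g u := by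
  rw [integral_comp_mul_left g hω, mul_zero, mul_div_cancel₀ _ hω, smul_eq_mul]

lemma rpow_three_div_two_eq_mul_sqrt {s : ℝ} (hs : 0 ≤ s) : s ^ ((3:ℝ) / 2) = s * √s := by
  rw [show (3:ℝ) / 2 = 1 + 1 / 2 by norm_num, rpow_add' hs (by norm_num), rpow_one, sqrt_eq_rpow]

theorem averaged_functions_corollary1_general
    (ω1 T1 : ℝ)
    (hω1 : ω1 = Real.sqrt (2 - Real.sqrt 2))
    (hT1 : T1 = 2 * π / ω1)
    (F1 F2 : ℝ → ℝ → ℝ → ℝ → ℝ → ℝ)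
    (hF1 : ∀ τ a b c d, F1 τ a b c d = 0)
    (hF2 : ∀ τ a b c d, F2 τ a b c d = (1 - a ^ 2) * sin (ω1 * τ))
    (A1 B1 C1 D1 : ℝ → ℝ → ℝ → ℝ)
    (hA1 : ∀ X0 Y0 τ, A1 X0 Y0 τ =
      (X0 * cos (ω1 * τ) + Y0 * sin (ω1 * τ)) / Real.sqrt (4 - 2 * Real.sqrt 2)) :
    ∀ X0 Y0 : ℝ,
      (∫ τ in (0:ℝ)..(1 * T1), sin (ω1 * τ) *
          (Real.sqrt 2 * F1 τ (A1 X0 Y0 τ) (B1 X0 Y0 τ) (C1 X0 Y0 τ) (D1 X0 Y0 τ) +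
            F2 τ (A1 X0 Y0 τ) (B1 X0 Y0 τ) (C1 X0 Y0 τ) (D1 X0 Y0 τ)))
        = -(π * (X0 ^ 2 + 3 * Y0 ^ 2 - 8 * (2 - Real.sqrt 2)) /
            (8 * (2 - Real.sqrt 2) ^ ((3:ℝ) / 2))) ∧
      (∫ τ in (0:ℝ)..(1 * T1), cos (ω1 * τ) *
          (Real.sqrt 2 * F1 τ (A1 X0 Y0 τ) (B1 X0 Y0 τ) (C1 X0 Y0 τ) (D1 X0 Y0 τ) +
            F2 τ (A1 X0 Y0 τ) (B1 X0 Y0 τ) (C1 X0 Y0 τ) (D1 X0 Y0 τ)))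
        = -(π * X0 * Y0 / (4 * (2 - Real.sqrt 2) ^ ((3:ℝ) / 2))) := by
  intro X Y
  have hs : 0 < 2 - √2 := sub_pos.2 (by rw [sqrt_lt' two_pos]; norm_num)
  have hω : ω1 ≠ 0 := by rw [hω1]; exact (sqrt_pos.2 hs).ne'
  have hq : √(4 - 2 * √2) ^ 2 = 2 * (2 - √2) := by rw [sq_sqrt (by linarith)]; ring
  have hpow : (2 - √2) ^ ((3:ℝ) / 2) = (2 - √2) * ω1 := by
    rw [rpow_three_div_two_eq_mul_sqrt hs.le, hω1]
  simp only [hF1, hF2, hA1, mul_zero, zero_add, one_mul, hT1]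
  rw [integral_comp_mul_left_zero_two_pi_div
      (fun u => sin u * ((1 - ((X * cos u + Y * sin u) / √(4 - 2 * √2)) ^ 2) * sin u)) hω,
    integral_comp_mul_left_zero_two_pi_div
      (fun u => cos u * ((1 - ((X * cos u + Y * sin u) / √(4 - 2 * √2)) ^ 2) * sin u)) hω,
    integral_sin_mul_one_sub_sq_mul_sin_zero_two_pi,
    integral_cos_mul_one_sub_sq_mul_sin_zero_two_pi, hq, hpow]
  constructor <;> field_simp <;> ring

/-- The explicit computation of the averaged functions `𝒢1, 𝒢2` for the
perturbation `F1 ≡ 0`, `F2 = (1 - θ1²) sin(ω1 τ)` with `p = 1`. -/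
theorem averaged_functions_corollary1
    (ω1 T1 : ℝ)
    (hω1 : ω1 = Real.sqrt (2 - Real.sqrt 2))
    (hT1 : T1 = 2 * π / ω1)
    (F1 F2 : ℝ → ℝ → ℝ → ℝ → ℝ → ℝ)
    (hF1 : ∀ τ a b c d, F1 τ a b c d = 0)
    (hF2 : ∀ τ a b c d, F2 τ a b c d = (1 - a ^ 2) * sin (ω1 * τ))
    (A1 B1 C1 D1 : ℝ → ℝ → ℝ → ℝ)
    (hA1 : ∀ X0 Y0 τ, A1 X0 Y0 τ =
      (X0 * cos (ω1 * τ) + Y0 * sin (ω1 * τ)) / Real.sqrt (4 - 2 * Real.sqrt 2))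
    (hB1 : ∀ X0 Y0 τ, B1 X0 Y0 τ =
      (Y0 * cos (ω1 * τ) - X0 * sin (ω1 * τ)) / Real.sqrt 2)
    (hC1 : ∀ X0 Y0 τ, C1 X0 Y0 τ =
      (X0 * cos (ω1 * τ) + Y0 * sin (ω1 * τ)) / Real.sqrt (2 - Real.sqrt 2))
    (hD1 : ∀ X0 Y0 τ, D1 X0 Y0 τ = Y0 * cos (ω1 * τ) - X0 * sin (ω1 * τ)) :
    ∀ X0 Y0 : ℝ,
      (∫ τ in (0:ℝ)..(1 * T1), sin (ω1 * τ) *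
          (Real.sqrt 2 * F1 τ (A1 X0 Y0 τ) (B1 X0 Y0 τ) (C1 X0 Y0 τ) (D1 X0 Y0 τ) +
            F2 τ (A1 X0 Y0 τ) (B1 X0 Y0 τ) (C1 X0 Y0 τ) (D1 X0 Y0 τ)))
        = -(π * (X0 ^ 2 + 3 * Y0 ^ 2 - 8 * (2 - Real.sqrt 2)) /
            (8 * (2 - Real.sqrt 2) ^ ((3:ℝ) / 2))) ∧
      (∫ τ in (0:ℝ)..(1 * T1), cos (ω1 * τ) *
          (Real.sqrt 2 * F1 τ (A1 X0 Y0 τ) (B1 X0 Y0 τ) (C1 X0 Y0 τ) (D1 X0 Y0 τ) +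
            F2 τ (A1 X0 Y0 τ) (B1 X0 Y0 τ) (C1 X0 Y0 τ) (D1 X0 Y0 τ)))
        = -(π * X0 * Y0 / (4 * (2 - Real.sqrt 2) ^ ((3:ℝ) / 2))) :=
  averaged_functions_corollary1_general ω1 T1 hω1 hT1 F1 F2 hF1 hF2 A1 B1 C1 D1 hA1
end

section
/- Define g1(X0, Y0) = −π (X0² + 3 Y0² − 8(2 − √2)) / (8 (2 − √2)^{3/2}) and g2(X0, Y0) = −π X0 Y0 / (4 (2 − √2)^{3/2}). Then the system g1 = g2 = 0 has exactly four real solutions, namely (X0, Y0) = (± 2√(2(2 − √2)), 0) and (X0, Y0) = (0, ± 2√((2/3)(2 − √2))), and at each of these four solutions the Jacobian determinant ∂(g1, g2)/∂(X0, Y0) is nonzero (i.e., all four are simple zeros). -/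
/-!
Up to nonzero constant factors, `g1` is `X0² + 3 Y0² - 8 (2 - √2)` and `g2` is `X0 Y0`, so the
zeros are the four points where the ellipse `X0² + 3 Y0² = 8 (2 - √2)` meets the coordinate axes.
The Jacobian determinant is a nonzero multiple of `X0² - 3 Y0²`, which equals `± 8 (2 - √2)` at
each of them.
-/

open Real

def ellipseAxesMap (a b r m : ℝ) (p : ℝ × ℝ) : ℝ × ℝ :=
  (a * (p.1 ^ 2 + b * p.2 ^ 2 - r), m * (p.1 * p.2))

theorem LinearMap.det_prod_smul_fst_add_smul_snd (A B C D : ℝ) :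
    LinearMap.det
      (((A • ContinuousLinearMap.fst ℝ ℝ ℝ + B • ContinuousLinearMap.snd ℝ ℝ ℝ).prod
        (C • ContinuousLinearMap.fst ℝ ℝ ℝ + D • ContinuousLinearMap.snd ℝ ℝ ℝ)
        : ℝ × ℝ →L[ℝ] ℝ × ℝ) : (ℝ × ℝ) →ₗ[ℝ] ℝ × ℝ) = A * D - B * C := by
  rw [← LinearMap.det_toMatrix (Module.Basis.finTwoProd ℝ), Matrix.det_fin_two]
  simp [LinearMap.toMatrix_apply]

theorem mul_eq_zero_and_sq_add_mul_sq_eq_iff {b r x y : ℝ} (hb : 0 < b) (hr : 0 ≤ r) :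
    x * y = 0 ∧ x ^ 2 + b * y ^ 2 = r ↔
      (x, y) = (√r, 0) ∨ (x, y) = (-√r, 0) ∨ (x, y) = (0, √(r / b)) ∨ (x, y) = (0, -√(r / b)) := by
  have hsr : √r ^ 2 = r := sq_sqrt hr
  have hsrb : b * √(r / b) ^ 2 = r := by rw [sq_sqrt (by positivity)]; field_simp
  simp only [Prod.mk.injEq]
  constructor
  · rintro ⟨hxy, hconic⟩
    rcases mul_eq_zero.mp hxy with rfl | rfl
    · have : y ^ 2 = √(r / b) ^ 2 := mul_left_cancel₀ hb.ne' (by linarith)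
      rcases sq_eq_sq_iff_eq_or_eq_neg.mp this with h | h <;> simp [h]
    · have : x ^ 2 = √r ^ 2 := by linarith
      rcases sq_eq_sq_iff_eq_or_eq_neg.mp this with h | h <;> simp [h]
  · rintro (⟨rfl, rfl⟩ | ⟨rfl, rfl⟩ | ⟨rfl, rfl⟩ | ⟨rfl, rfl⟩) <;> simp [hsr, hsrb]

theorem ellipseAxesMap_eq_zero_iff {a b r m x y : ℝ} (ha : a ≠ 0) (hm : m ≠ 0) :
    ellipseAxesMap a b r m (x, y) = (0, 0) ↔ x * y = 0 ∧ x ^ 2 + b * y ^ 2 = r := by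
  simp [ellipseAxesMap, ha, hm, sub_eq_zero, and_comm]

theorem hasFDerivAt_ellipseAxesMap (a b r m x y : ℝ) :
    HasFDerivAt (ellipseAxesMap a b r m)
      (((2 * a * x) • ContinuousLinearMap.fst ℝ ℝ ℝ +
        (2 * a * b * y) • ContinuousLinearMap.snd ℝ ℝ ℝ).prod
       ((m * y) • ContinuousLinearMap.fst ℝ ℝ ℝ +
        (m * x) • ContinuousLinearMap.snd ℝ ℝ ℝ)) (x, y) := by
  have hfst : HasFDerivAt (fun p : ℝ × ℝ => p.1) (ContinuousLinearMap.fst ℝ ℝ ℝ) (x, y) :=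
    hasFDerivAt_fst
  have hsnd : HasFDerivAt (fun p : ℝ × ℝ => p.2) (ContinuousLinearMap.snd ℝ ℝ ℝ) (x, y) :=
    hasFDerivAt_snd
  have hconic := ((((hfst.pow 2).add ((hsnd.pow 2).const_mul b)).sub_const r).const_mul a)
  have hprod := (hfst.mul hsnd).const_mul m
  exact (hconic.prodMk hprod).congr_fderiv (by ext <;> simp <;> ring)

theorem det_fderiv_ellipseAxesMap (a b r m x y : ℝ) :
    LinearMap.det (fderiv ℝ (ellipseAxesMap a b r m) (x, y) : (ℝ × ℝ) →ₗ[ℝ] ℝ × ℝ) =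
      2 * a * m * (x ^ 2 - b * y ^ 2) := by
  rw [(hasFDerivAt_ellipseAxesMap a b r m x y).fderiv,
    LinearMap.det_prod_smul_fst_add_smul_snd]
  ring

theorem det_fderiv_ellipseAxesMap_ne_zero {a b r m : ℝ} (ha : a ≠ 0) (hm : m ≠ 0) (hr : r ≠ 0)
    {z : ℝ × ℝ} (hz : ellipseAxesMap a b r m z = (0, 0)) :
    LinearMap.det (fderiv ℝ (ellipseAxesMap a b r m) z : (ℝ × ℝ) →ₗ[ℝ] ℝ × ℝ) ≠ 0 := by
  obtain ⟨x, y⟩ := z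
  obtain ⟨hxy, hconic⟩ := (ellipseAxesMap_eq_zero_iff ha hm).mp hz
  rw [det_fderiv_ellipseAxesMap]
  have : x ^ 2 - b * y ^ 2 ≠ 0 := by
    rcases mul_eq_zero.mp hxy with rfl | rfl
    · simpa [← hconic] using hr
    · simpa [← hconic] using hr
  exact mul_ne_zero (mul_ne_zero (mul_ne_zero two_ne_zero ha) hm) this

/-- The system `g1 = g2 = 0` arising in Corollary 1 has exactly four real
solutions, all of them simple zeros. -/
theorem simple_zeros_corollary1
    (g : ℝ × ℝ → ℝ × ℝ)
    (hg : ∀ X0 Y0 : ℝ, g (X0, Y0) =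
      (-(π * (X0 ^ 2 + 3 * Y0 ^ 2 - 8 * (2 - Real.sqrt 2)) /
          (8 * (2 - Real.sqrt 2) ^ ((3:ℝ) / 2))),
       -(π * X0 * Y0 / (4 * (2 - Real.sqrt 2) ^ ((3:ℝ) / 2))))) :
    (∀ X0 Y0 : ℝ, g (X0, Y0) = (0, 0) ↔
      ((X0, Y0) = (2 * Real.sqrt (2 * (2 - Real.sqrt 2)), 0) ∨
       (X0, Y0) = (-(2 * Real.sqrt (2 * (2 - Real.sqrt 2))), 0) ∨
       (X0, Y0) = (0, 2 * Real.sqrt (2 / 3 * (2 - Real.sqrt 2))) ∨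
       (X0, Y0) = (0, -(2 * Real.sqrt (2 / 3 * (2 - Real.sqrt 2)))))) ∧
    (∀ z : ℝ × ℝ,
      (z = (2 * Real.sqrt (2 * (2 - Real.sqrt 2)), 0) ∨
       z = (-(2 * Real.sqrt (2 * (2 - Real.sqrt 2))), 0) ∨
       z = (0, 2 * Real.sqrt (2 / 3 * (2 - Real.sqrt 2))) ∨
       z = (0, -(2 * Real.sqrt (2 / 3 * (2 - Real.sqrt 2))))) →
      LinearMap.det ((fderiv ℝ g z) : (ℝ × ℝ) →ₗ[ℝ] ℝ × ℝ) ≠ 0) := by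
  set c := 2 - √2
  have hc : 0 < c := sub_pos.mpr ((sqrt_lt' two_pos).mpr (by norm_num))
  set K := c ^ ((3:ℝ) / 2)
  have hK : K ≠ 0 := (rpow_pos_of_pos hc _).ne'
  have ha : -(π / (8 * K)) ≠ 0 := by simp [pi_ne_zero, hK]
  have hm : -(π / (4 * K)) ≠ 0 := by simp [pi_ne_zero, hK]
  have hG : g = ellipseAxesMap (-(π / (8 * K))) 3 (8 * c) (-(π / (4 * K))) := by
    funext ⟨x, y⟩
    rw [hg, ellipseAxesMap]
    congr 1 <;> ring
  have hs : 2 * √(2 * c) = √(8 * c) := by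
    rw [show 8 * c = 2 ^ 2 * (2 * c) by ring, sqrt_mul (sq_nonneg 2), sqrt_sq zero_le_two]
  have ht : 2 * √(2 / 3 * c) = √(8 * c / 3) := by
    rw [show 8 * c / 3 = 2 ^ 2 * (2 / 3 * c) by ring, sqrt_mul (sq_nonneg 2), sqrt_sq zero_le_two]
  have hzeros : ∀ x y : ℝ, g (x, y) = (0, 0) ↔ (x, y) = (2 * √(2 * c), 0) ∨
      (x, y) = (-(2 * √(2 * c)), 0) ∨ (x, y) = (0, 2 * √(2 / 3 * c)) ∨
      (x, y) = (0, -(2 * √(2 / 3 * c))) := fun x y => by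
    rw [hG, ellipseAxesMap_eq_zero_iff ha hm,
      mul_eq_zero_and_sq_add_mul_sq_eq_iff three_pos (by positivity), hs, ht]
  refine ⟨hzeros, fun z hz => ?_⟩
  rw [hG]
  exact det_fderiv_ellipseAxesMap_ne_zero ha hm (by positivity) (hG ▸ (hzeros z.1 z.2).mpr hz)
end

section
/- Define h1(Z0, W0) = −π (√((10 − 7√2)(2 + √2)) W0 − 8) Z0 / (4 √(2(2 + √2))) and h2(Z0, W0) = π (√2 W0² − 2 W0² − 16 W0 + 3√2 Z0² − 6 Z0²) / (8 √(2(2 + √2))). Then the only real solutions of the system h1 = h2 = 0 are (Z0, W0) = (0, 0) and (Z0, W0) = (0, −8(2 + √2)); moreover, at (0, −8(2 + √2)) the Jacobian determinant ∂(h1, h2)/∂(Z0, W0) is nonzero (i.e., it is a simple zero). -/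
/-!
After clearing the positive factor `π / (8 √(2(2+√2)))` the system reads
`(A W - 8) Z = 0`, `k W² - 16 W + 3 k Z² = 0` with `A ≥ 0` and `k = √2 - 2 < 0`.
On the branch `A W = 8` we have `W > 0`, where the second left-hand side is negative;
so `Z = 0` and `W (k W - 16) = 0`, and `16 / k = -8(2+√2)`. Since `h₁` is `Z` times a
function of `W` and `h₂` depends on `Z` only through `Z²`, the Jacobian at `Z = 0` is diagonal.
-/

open Real

theorem quadratic_system_eq_zero_iff {A k Z W : ℝ} (hA : 0 ≤ A) (hk : k < 0) :
    (A * W - 8) * Z = 0 ∧ k * W ^ 2 - 16 * W + 3 * k * Z ^ 2 = 0 ↔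
      (Z, W) = (0, 0) ∨ (Z, W) = (0, 16 / k) := by
  constructor
  · rintro ⟨h1, h2⟩
    obtain rfl : Z = 0 := by
      refine (mul_eq_zero.1 h1).resolve_left fun hAW => ?_
      have hW : 0 < W := by nlinarith
      nlinarith [sq_nonneg Z]
    have hW : W * (k * W - 16) = 0 := by linear_combination h2
    rcases mul_eq_zero.1 hW with hW | hW
    · simp [hW]
    · right
      simp only [Prod.mk.injEq, true_and]
      rw [eq_div_iff hk.ne]
      linarith
  · rintro (h | h) <;> obtain ⟨rfl, rfl⟩ := Prod.mk.inj h
    · simp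
    · refine ⟨by ring, ?_⟩
      field_simp
      ring

theorem hasFDerivAt_mul_affine_prod_quadratic (a b p q r w : ℝ) :
    HasFDerivAt (fun x : ℝ × ℝ => (x.1 * (a * x.2 + b), p * x.2 ^ 2 + q * x.2 + r * x.1 ^ 2))
      (((a * w + b) • ContinuousLinearMap.fst ℝ ℝ ℝ).prod
        ((2 * p * w + q) • ContinuousLinearMap.snd ℝ ℝ ℝ)) (0, w) := by
  have hfst := hasFDerivAt_fst (𝕜 := ℝ) (E := ℝ) (F := ℝ) (p := ((0 : ℝ), w))
  have hsnd := hasFDerivAt_snd (𝕜 := ℝ) (E := ℝ) (F := ℝ) (p := ((0 : ℝ), w))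
  refine HasFDerivAt.prodMk ?_ ?_
  · refine (hfst.mul ((hsnd.const_mul a).add_const b)).congr_fderiv ?_
    ext <;> simp
  · refine ((((hsnd.pow 2).const_mul p).add (hsnd.const_mul q)).add
      ((hfst.pow 2).const_mul r)).congr_fderiv ?_
    ext <;> simp
    ring

theorem det_smul_fst_prod_smul_snd (a b : ℝ) :
    LinearMap.det (((a • ContinuousLinearMap.fst ℝ ℝ ℝ).prod
      (b • ContinuousLinearMap.snd ℝ ℝ ℝ)) : (ℝ × ℝ) →ₗ[ℝ] ℝ × ℝ) = a * b := by
  rw [← LinearMap.det_toMatrix (Module.Basis.finTwoProd ℝ), Matrix.det_fin_two]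
  simp [LinearMap.toMatrix_apply]

/-- The system `h1 = h2 = 0` arising in Corollary 2 has exactly two real
solutions, `(0, 0)` and `(0, -8(2+√2))`, and the latter is a simple zero. -/
theorem simple_zeros_corollary2
    (h : ℝ × ℝ → ℝ × ℝ)
    (hh : ∀ Z0 W0 : ℝ, h (Z0, W0) =
      (-(π * (Real.sqrt ((10 - 7 * Real.sqrt 2) * (2 + Real.sqrt 2)) * W0 - 8) * Z0 /
          (4 * Real.sqrt (2 * (2 + Real.sqrt 2)))),
       π * (Real.sqrt 2 * W0 ^ 2 - 2 * W0 ^ 2 - 16 * W0 +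
          3 * Real.sqrt 2 * Z0 ^ 2 - 6 * Z0 ^ 2) /
          (8 * Real.sqrt (2 * (2 + Real.sqrt 2))))) :
    (∀ Z0 W0 : ℝ, h (Z0, W0) = (0, 0) ↔
      ((Z0, W0) = ((0:ℝ), (0:ℝ)) ∨ (Z0, W0) = ((0:ℝ), -8 * (2 + Real.sqrt 2)))) ∧
    LinearMap.det
      ((fderiv ℝ h ((0:ℝ), -8 * (2 + Real.sqrt 2))) : (ℝ × ℝ) →ₗ[ℝ] ℝ × ℝ) ≠ 0 := by
  set s := √2
  set A := √((10 - 7 * s) * (2 + s))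
  set D := √(2 * (2 + s))
  have hA : 0 ≤ A := sqrt_nonneg _
  have hs : s ^ 2 = 2 := sq_sqrt zero_le_two
  have hs2 : s < 2 := by nlinarith [sqrt_nonneg 2]
  have hD : 0 < D := sqrt_pos.2 (by positivity)
  set c := π / (8 * D)
  have hc : 0 < c := by positivity
  have hw : -8 * (2 + s) = 16 / (s - 2) := by
    rw [eq_div_iff (by linarith)]
    linear_combination -8 * hs
  have hfactored : ∀ Z W, h (Z, W) =
      (-(2 * c) * ((A * W - 8) * Z), c * ((s - 2) * W ^ 2 - 16 * W + 3 * (s - 2) * Z ^ 2)) := by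
    intro Z W
    rw [hh]
    congr 1 <;> simp only [c] <;> field_simp <;> ring
  refine ⟨fun Z W => ?_, ?_⟩
  · rw [hfactored, hw, ← quadratic_system_eq_zero_iff hA (by linarith)]
    simp [hc.ne']
  · have hform : h = fun x : ℝ × ℝ => (x.1 * (-(2 * c * A) * x.2 + 16 * c),
        c * (s - 2) * x.2 ^ 2 + -(16 * c) * x.2 + 3 * c * (s - 2) * x.1 ^ 2) := by
      funext ⟨Z, W⟩
      rw [hfactored]
      congr 1 <;> ring
    rw [hform, (hasFDerivAt_mul_affine_prod_quadratic _ _ _ _ _ _).fderiv,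
      det_smul_fst_prod_smul_snd, hw]
    have hAw : A * (16 / (s - 2)) ≤ 0 :=
      mul_nonpos_of_nonneg_of_nonpos hA
        (div_nonpos_of_nonneg_of_nonpos (by norm_num) (by linarith))
    have hdiag₁ : 0 < -(2 * c * A) * (16 / (s - 2)) + 16 * c := by nlinarith
    have hdiag₂ : 2 * (c * (s - 2)) * (16 / (s - 2)) + -(16 * c) = 16 * c := by
      field_simp [show s - 2 ≠ 0 by linarith]
      ring
    rw [hdiag₂]
    exact (mul_pos hdiag₁ (by positivity)).ne'
end
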